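/- For any generator enriched lattice (L,G), the minor poset M(L,G) is thin: every interval of length 2 in M(L,G) is isomorphic to the Boolean algebra B₂, i.e., contains exactly two elements strictly between its endpoints. -/

import Mathlib

open Finset

/-- A generator-enriched lattice datum inside an ambient lattice `L`:
a minimal element `z` together with a finite generating set of elements
strictly above `z`. The underlying set of elements consists of all joins
of `z` with subsets of the generating set. -/
structure GEL (L : Type*) [Lattice L] [DecidableEq L] where
  z : L
  gens : Finset L
  lt_gens : ∀ g ∈ gens, z < g

namespace GEL

variable {L K : Type*} [Lattice L] [OrderBot L] [DecidableEq L]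

/-- The underlying set of elements of a generator enriched lattice. -/
def carrier (M : GEL L) : Finset L :=
  M.gens.powerset.image fun X => X.sup id ⊔ M.z

/-- Deletion of a set of generators. -/
def delete (M : GEL L) (I : Finset L) : GEL L :=
  ⟨M.z, M.gens \ I, fun g hg => M.lt_gens g (Finset.mem_sdiff.mp hg).1⟩

/-- Restriction to a set of generators. -/
def restrict (M : GEL L) (I : Finset L) : GEL L :=
  M.delete (M.gens \ I)

/-- Contraction by a set of generators. -/
def contract (M : GEL L) (I : Finset L) : GEL L :=
  ⟨I.sup id ⊔ M.z,
   (M.gens.image fun g => g ⊔ (I.sup id ⊔ M.z)).erase (I.sup id ⊔ M.z),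
   fun g hg => by
     obtain ⟨hne, hg'⟩ := Finset.mem_erase.mp hg
     obtain ⟨h, -, rfl⟩ := Finset.mem_image.mp hg'
     exact lt_of_le_of_ne le_sup_right (Ne.symm hne)⟩

open Classical in
/-- Contraction by an element: contract by all generators below it. -/
noncomputable def contractEl (M : GEL L) (ℓ : L) : GEL L :=
  M.contract (M.gens.filter fun g => g ≤ ℓ)

/-- A single deletion or contraction step. -/
def Step (M N : GEL L) : Prop :=
  ∃ I ⊆ M.gens, N = M.delete I ∨ N = M.contract I

/-- `Minor M N` : `N` is a minor of `M`, i.e. obtained from `M` by a finite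
sequence of deletions and contractions. -/
def Minor (M N : GEL L) : Prop :=
  Relation.ReflTransGen Step M N

/-- The generator enriched lattice on a lattice with `⊥`, with the given generating set. -/
def ofGens (G : Finset L) (hG : ∀ g ∈ G, (⊥ : L) < g) : GEL L :=
  ⟨⊥, G, hG⟩

/-- The underlying type of the minor poset of `T`: all minors of `T`
together with an adjoined minimum `none`. -/
abbrev MP (T : GEL L) := Option {M : GEL L // T.Minor M}

/-- The order relation of the minor poset. -/
def mple (T : GEL L) : MP T → MP T → Prop
  | none, _ => True
  | some _, none => False
  | some A, some B => B.1.Minor A.1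

/-- The rank function of the minor poset. -/
def mrank (T : GEL L) : MP T → ℕ
  | none => 0
  | some A => A.1.gens.card + 1

/-- A parallel: an element `ℓ` and distinct generators `g, h` with
`g ⊔ ℓ = h ⊔ ℓ ≠ ℓ`. -/
def HasParallel (M : GEL L) : Prop :=
  ∃ ℓ ∈ M.carrier, ∃ g ∈ M.gens, ∃ h ∈ M.gens,
    g ≠ h ∧ g ⊔ ℓ = h ⊔ ℓ ∧ g ⊔ ℓ ≠ ℓ

/-- Isomorphism of generator enriched lattices: a join-preserving bijection of the
underlying sets carrying the generating set onto the generating set. -/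
def GIso [Lattice K] [OrderBot K] [DecidableEq K] (M : GEL L) (N : GEL K) : Prop :=
  ∃ f : L → K, Set.BijOn f ↑M.carrier ↑N.carrier ∧
    (∀ a ∈ M.carrier, ∀ b ∈ M.carrier, f (a ⊔ b) = f a ⊔ f b) ∧
    f '' ↑M.gens = ↑N.gens

open Classical in
/-- The image generator enriched lattice `⟨f(I) | f(z)⟩` of a strong map. -/
noncomputable def map [Lattice K] [DecidableEq K] (f : L → K) (M : GEL L) : GEL K :=
  ⟨f M.z, (M.gens.image f).filter fun y => f M.z < y,
   fun g hg => (Finset.mem_filter.mp hg).2⟩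

/-- `T` lifts join irreducibles: for every `ℓ` and generator `g` with `g ≰ ℓ`,
the element `g ⊔ ℓ` is join irreducible in the interval `[ℓ, ⊤]`. -/
def LiftsJI (T : GEL L) : Prop :=
  ∀ ℓ : L, ∀ g ∈ T.gens, ¬ g ≤ ℓ →
    ∀ a b : L, ℓ ≤ a → ℓ ≤ b → g ⊔ ℓ = a ⊔ b → g ⊔ ℓ = a ∨ g ⊔ ℓ = b

end GEL

/-!
A minor `N` of `M` is determined by its bottom `N.z`, which can be any element of `M.carrier`,
and by `N.gens`, which can be any subset of the generators `g ⊔ N.z ≠ N.z` of the contraction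
of `M` to `N.z`. Counting these shows that the minors of `B` with one generator fewer are the
single deletions `B ∖ f` and those single contractions `B / s` that lose no generator besides
`s`. So if `A` is a minor of `B` with two generators fewer, the elements strictly between them
are those `B ∖ f` and `B / s` that still have `A` as a minor, and one counts them according to
the generators of `B` below `A.z`:
* none: `A.z = B.z`, and `f` ranges over the two generators of `B` missing from `A`;
* one, `s`: either `B / s` and the unique `B ∖ f` with `f ⊔ s ∉ A.gens`, or, if two
  generators `f ≠ g` of `B` not below `s` satisfy `f ⊔ s = g ⊔ s`, exactly `B ∖ f` and `B ∖ g`;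
* two, `s` and `t`: `B ∖ s` qualifies iff `s ≤ t`, and `B / s` iff `t ≰ s`.
-/

set_option linter.unusedSectionVars false

theorem Finset.card_add_card_eq_two_of_subset_pair {α : Type*} [DecidableEq α]
    {F T : Finset α} {a b : α}
    (hab : a ≠ b) (hF : F ⊆ {a, b}) (hT : T ⊆ {a, b}) (ha : a ∈ F ↔ b ∉ T)
    (hb : b ∈ F ↔ a ∉ T) : F.card + T.card = 2 := by
  rw [← Finset.inter_eq_right.mpr hF, ← Finset.inter_eq_right.mpr hT,
    ← Finset.filter_mem_eq_inter, ← Finset.filter_mem_eq_inter, Finset.card_filter,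
    Finset.card_filter, Finset.sum_pair hab, Finset.sum_pair hab]
  by_cases haF : a ∈ F <;> by_cases hbF : b ∈ F <;> simp_all

namespace GEL

section

variable {L : Type*} [Lattice L] [DecidableEq L]

lemma ext {M N : GEL L} (hz : M.z = N.z) (hg : M.gens = N.gens) : M = N := by
  cases M; cases N; simp_all

def contractGens (M : GEL L) (ℓ : L) : Finset L :=
  (M.gens.image (· ⊔ ℓ)).erase ℓ

lemma mem_contractGens {M : GEL L} {ℓ x : L} :
    x ∈ M.contractGens ℓ ↔ x ≠ ℓ ∧ ∃ g ∈ M.gens, g ⊔ ℓ = x := by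
  simp [contractGens]

lemma contractGens_z (M : GEL L) : M.contractGens M.z = M.gens := by
  ext x
  simp only [mem_contractGens]
  constructor
  · rintro ⟨-, g, hg, rfl⟩
    rwa [sup_eq_left.mpr (M.lt_gens g hg).le]
  · intro hx
    exact ⟨(M.lt_gens x hx).ne', x, hx, sup_eq_left.mpr (M.lt_gens x hx).le⟩

lemma contractGens_mono {M N : GEL L} (h : M.gens ⊆ N.gens) (ℓ : L) :
    M.contractGens ℓ ⊆ N.contractGens ℓ :=
  Finset.erase_subset_erase _ (Finset.image_subset_image h)

open Classical in
lemma contractGens_eq_image (M : GEL L) (ℓ : L) :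
    M.contractGens ℓ = (M.gens.filter (¬ · ≤ ℓ)).image (· ⊔ ℓ) := by
  ext x
  simp only [mem_contractGens, Finset.mem_image, Finset.mem_filter]
  constructor
  · rintro ⟨hx, g, hg, rfl⟩
    exact ⟨g, ⟨hg, fun h => hx (sup_eq_right.mpr h)⟩, rfl⟩
  · rintro ⟨g, ⟨hg, hgℓ⟩, rfl⟩
    exact ⟨fun h => hgℓ (sup_eq_right.mp h), g, hg, rfl⟩

open Classical in
lemma card_contractGens_add_card_filter_le (M : GEL L) (ℓ : L) :
    (M.contractGens ℓ).card + (M.gens.filter (· ≤ ℓ)).card ≤ M.gens.card := by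
  rw [contractGens_eq_image, ← Finset.card_filter_add_card_filter_not (s := M.gens) (· ≤ ℓ),
    add_comm]
  exact Nat.add_le_add_left Finset.card_image_le _

lemma delete_singleton_gens (M : GEL L) (f : L) : (M.delete {f}).gens = M.gens.erase f :=
  Finset.sdiff_singleton_eq_erase f M.gens

def Collides (M : GEL L) (ℓ f : L) : Prop :=
  ∃ g ∈ M.gens, g ≠ f ∧ g ⊔ ℓ = f ⊔ ℓ

lemma filter_delete_singleton (M : GEL L) (f : L) (p : L → Prop) [DecidablePred p] :
    (M.delete {f}).gens.filter p = (M.gens.filter p).erase f := by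
  rw [delete_singleton_gens, Finset.filter_erase]

lemma contractGens_delete_singleton_of_le {M : GEL L} {ℓ f : L} (hf : f ≤ ℓ) :
    (M.delete {f}).contractGens ℓ = M.contractGens ℓ := by
  ext x
  simp only [mem_contractGens, delete_singleton_gens, Finset.mem_erase]
  constructor
  · rintro ⟨hx, g, ⟨-, hg⟩, rfl⟩
    exact ⟨hx, g, hg, rfl⟩
  · rintro ⟨hx, g, hg, rfl⟩
    exact ⟨hx, g, ⟨fun hgf => hx (by rw [hgf, sup_eq_right.mpr hf]), hg⟩, rfl⟩

lemma contractGens_delete_singleton_of_collides {M : GEL L} {ℓ f : L} (hf : M.Collides ℓ f) :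
    (M.delete {f}).contractGens ℓ = M.contractGens ℓ := by
  obtain ⟨g', hg', hg'f, hg'ℓ⟩ := hf
  ext x
  simp only [mem_contractGens, delete_singleton_gens, Finset.mem_erase]
  constructor
  · rintro ⟨hx, g, ⟨-, hg⟩, rfl⟩
    exact ⟨hx, g, hg, rfl⟩
  · rintro ⟨hx, g, hg, rfl⟩
    by_cases hgf : g = f
    · exact ⟨hx, g', ⟨hg'f, hg'⟩, by rw [hg'ℓ, hgf]⟩
    · exact ⟨hx, g, ⟨hgf, hg⟩, rfl⟩

lemma contractGens_delete_singleton_of_not_collides {M : GEL L} {ℓ f : L}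
    (hf : ¬ M.Collides ℓ f) :
    (M.delete {f}).contractGens ℓ = (M.contractGens ℓ).erase (f ⊔ ℓ) := by
  ext x
  simp only [mem_contractGens, delete_singleton_gens, Finset.mem_erase]
  constructor
  · rintro ⟨hx, g, ⟨hgf, hg⟩, rfl⟩
    exact ⟨fun he => hf ⟨g, hg, hgf, he⟩, hx, g, hg, rfl⟩
  · rintro ⟨hxf, hx, g, hg, rfl⟩
    exact ⟨hx, g, ⟨fun hgf => hxf (by rw [hgf]), hg⟩, rfl⟩

open Classical in
lemma card_contractGens_add_card_filter_lt_iff (M : GEL L) (ℓ : L) :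
    (M.contractGens ℓ).card + (M.gens.filter (· ≤ ℓ)).card < M.gens.card ↔
      ∃ f ∈ M.gens, ¬ f ≤ ℓ ∧ M.Collides ℓ f := by
  constructor
  · intro hlt
    by_contra! hinj
    refine hlt.ne ?_
    rw [contractGens_eq_image, Finset.card_image_of_injOn, add_comm,
      Finset.card_filter_add_card_filter_not]
    intro f hf g hg hfg
    by_contra hne
    obtain ⟨hf, hfℓ⟩ := Finset.mem_filter.mp hf
    exact hinj f hf hfℓ ⟨g, (Finset.mem_filter.mp hg).1, Ne.symm hne, hfg.symm⟩
  · rintro ⟨f, hf, hfℓ, hc⟩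
    have h := card_contractGens_add_card_filter_le (M.delete {f}) ℓ
    rw [contractGens_delete_singleton_of_collides hc, filter_delete_singleton,
      Finset.erase_eq_of_notMem (s := M.gens.filter (· ≤ ℓ)) (a := f)
        (fun h => hfℓ (Finset.mem_filter.mp h).2),
      delete_singleton_gens] at h
    have := Finset.card_erase_add_one hf
    omega

end

variable {L : Type*} [Lattice L] [OrderBot L] [DecidableEq L]

open Classical

lemma contract_gens (M : GEL L) (I : Finset L) :
    (M.contract I).gens = M.contractGens (M.contract I).z := rfl

lemma contractGens_contract (M : GEL L) (I : Finset L) {ℓ : L} (h : (M.contract I).z ≤ ℓ) :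
    (M.contract I).contractGens ℓ = M.contractGens ℓ := by
  ext x
  simp only [mem_contractGens, contract_gens]
  constructor
  · rintro ⟨hx, -, ⟨-, g, hg, rfl⟩, rfl⟩
    exact ⟨hx, g, hg, by rw [sup_assoc, sup_eq_right.mpr h]⟩
  · rintro ⟨hx, g, hg, rfl⟩
    refine ⟨hx, g ⊔ (M.contract I).z, ⟨fun he => hx ?_, g, hg, rfl⟩, ?_⟩
    · rw [← sup_eq_right.mpr h, ← sup_assoc, he]
    · rw [sup_assoc, sup_eq_right.mpr h]

/-- The largest element of `M.carrier` below `ℓ`, provided `M.z ≤ ℓ`. -/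
noncomputable def spanBelow (M : GEL L) (ℓ : L) : L :=
  (M.gens.filter (· ≤ ℓ)).sup id ⊔ M.z

lemma mem_carrier_iff {M : GEL L} {ℓ : L} : ℓ ∈ M.carrier ↔ M.spanBelow ℓ = ℓ := by
  simp only [carrier, spanBelow, Finset.mem_image, Finset.mem_powerset]
  constructor
  · rintro ⟨I, hI, rfl⟩
    refine le_antisymm (sup_le (Finset.sup_le fun g hg => (Finset.mem_filter.mp hg).2)
      le_sup_right) (sup_le_sup_right (Finset.sup_mono fun g hg => ?_) _)
    exact Finset.mem_filter.mpr ⟨hI hg, le_sup_of_le_left (Finset.le_sup (f := id) hg)⟩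
  · exact fun h => ⟨_, Finset.filter_subset _ _, h⟩

lemma z_mem_carrier (M : GEL L) : M.z ∈ M.carrier :=
  Finset.mem_image.mpr ⟨∅, Finset.empty_mem_powerset _, by simp⟩

lemma carrier_mono {M N : GEL L} (hz : M.z = N.z) (h : M.gens ⊆ N.gens) :
    M.carrier ⊆ N.carrier := by
  simp only [carrier, hz]
  exact Finset.image_subset_image (Finset.powerset_mono.mpr h)

lemma z_le_spanBelow (M : GEL L) (ℓ : L) : M.z ≤ M.spanBelow ℓ := le_sup_right

lemma spanBelow_contract {M : GEL L} {I : Finset L} (hI : I ⊆ M.gens) {ℓ : L}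
    (h : (M.contract I).z ≤ ℓ) : (M.contract I).spanBelow ℓ = M.spanBelow ℓ := by
  have hgen : ∀ g ∈ M.gens, g ≤ ℓ → g ≤ M.spanBelow ℓ := fun g hg hgℓ =>
    le_sup_of_le_left (Finset.le_sup (f := id) (Finset.mem_filter.mpr ⟨hg, hgℓ⟩))
  have hw : (M.contract I).z ≤ M.spanBelow ℓ :=
    sup_le (Finset.sup_le fun i hi => hgen i (hI hi)
      ((le_sup_of_le_left (Finset.le_sup (f := id) hi)).trans h)) (z_le_spanBelow M ℓ)
  apply le_antisymm
  · refine sup_le (Finset.sup_le fun x hx => ?_) hw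
    obtain ⟨hx, hxℓ⟩ := Finset.mem_filter.mp hx
    obtain ⟨-, g, hg, rfl⟩ := mem_contractGens.mp hx
    exact sup_le (hgen g hg (le_sup_left.trans hxℓ)) hw
  · refine sup_le (Finset.sup_le fun g hg => ?_) ((z_le_spanBelow _ ℓ).trans' le_sup_right)
    obtain ⟨hg, hgℓ⟩ := Finset.mem_filter.mp hg
    by_cases hgw : g ⊔ (M.contract I).z = (M.contract I).z
    · exact (sup_eq_right.mp hgw).trans (z_le_spanBelow _ ℓ)
    · have hx : g ⊔ (M.contract I).z ∈ (M.contract I).gens.filter (· ≤ ℓ) :=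
        Finset.mem_filter.mpr ⟨mem_contractGens.mpr ⟨hgw, g, hg, rfl⟩, sup_le hgℓ h⟩
      exact le_sup_of_le_left (le_sup_left.trans (Finset.le_sup (f := id) hx))

lemma mem_carrier_contract {M : GEL L} {I : Finset L} (hI : I ⊆ M.gens) {ℓ : L} :
    ℓ ∈ (M.contract I).carrier ↔ ℓ ∈ M.carrier ∧ (M.contract I).z ≤ ℓ := by
  simp only [mem_carrier_iff]
  constructor
  · intro h
    have hw : (M.contract I).z ≤ ℓ := h ▸ z_le_spanBelow _ ℓ
    exact ⟨spanBelow_contract hI hw ▸ h, hw⟩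
  · rintro ⟨h, hw⟩
    rwa [spanBelow_contract hI hw]

theorem minor_iff {M N : GEL L} :
    Minor M N ↔ N.z ∈ M.carrier ∧ N.gens ⊆ M.contractGens N.z := by
  constructor
  · intro h
    induction h using Relation.ReflTransGen.head_induction_on with
    | refl => exact ⟨z_mem_carrier N, (contractGens_z N).superset⟩
    | @head A _ hstep _ ih =>
      obtain ⟨I, hI, rfl | rfl⟩ := hstep
      · exact ⟨carrier_mono (M := A.delete I) (N := A) rfl Finset.sdiff_subset ih.1,
          ih.2.trans (contractGens_mono Finset.sdiff_subset _)⟩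
      · obtain ⟨hz, hw⟩ := (mem_carrier_contract hI).mp ih.1
        exact ⟨hz, contractGens_contract _ I hw ▸ ih.2⟩
  · rintro ⟨hz, hgens⟩
    obtain ⟨I, hI, hIz⟩ := Finset.mem_image.mp hz
    have hC : (M.contract I).z = N.z := hIz
    refine .head ⟨I, Finset.mem_powerset.mp hI, Or.inr rfl⟩
      (.single ⟨(M.contract I).gens \ N.gens, Finset.sdiff_subset, Or.inl ?_⟩)
    refine ext hC.symm ?_
    change N.gens = (M.contract I).gens \ ((M.contract I).gens \ N.gens)
    rw [Finset.sdiff_sdiff_self_left]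
    exact (Finset.inter_eq_right.mpr (by rwa [contract_gens, hC])).symm

lemma minor_contract_iff {M N : GEL L} {I : Finset L} (hI : I ⊆ M.gens) :
    Minor (M.contract I) N ↔ Minor M N ∧ (M.contract I).z ≤ N.z := by
  rw [minor_iff, minor_iff, mem_carrier_contract hI]
  constructor
  · rintro ⟨⟨hz, hw⟩, hgens⟩
    exact ⟨⟨hz, contractGens_contract M I hw ▸ hgens⟩, hw⟩
  · rintro ⟨⟨hz, hgens⟩, hw⟩
    exact ⟨⟨hz, hw⟩, (contractGens_contract M I hw).symm ▸ hgens⟩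

lemma minor_iff_of_z_eq {M N : GEL L} (h : N.z = M.z) : Minor M N ↔ N.gens ⊆ M.gens := by
  rw [minor_iff, h, contractGens_z]
  exact and_iff_right (z_mem_carrier M)

lemma minor_delete (M : GEL L) {I : Finset L} (hI : I ⊆ M.gens) : Minor M (M.delete I) :=
  .single ⟨I, hI, Or.inl rfl⟩

lemma minor_contract (M : GEL L) {I : Finset L} (hI : I ⊆ M.gens) : Minor M (M.contract I) :=
  .single ⟨I, hI, Or.inr rfl⟩

lemma card_gens_add_card_filter_le_of_minor {M N : GEL L} (h : Minor M N) :
    N.gens.card + (M.gens.filter (· ≤ N.z)).card ≤ M.gens.card :=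
  (Nat.add_le_add_right (Finset.card_le_card (minor_iff.mp h).2) _).trans
    (card_contractGens_add_card_filter_le M N.z)

lemma filter_nonempty_of_minor {M N : GEL L} (h : Minor M N) (hz : N.z ≠ M.z) :
    (M.gens.filter (· ≤ N.z)).Nonempty := by
  rw [Finset.nonempty_iff_ne_empty]
  intro he
  apply hz
  rw [← mem_carrier_iff.mp (minor_iff.mp h).1, spanBelow, he, Finset.sup_empty, bot_sup_eq]

lemma card_lt_of_minor {M N : GEL L} (h : Minor M N) (hne : N ≠ M) :
    N.gens.card < M.gens.card := by
  by_cases hz : N.z = M.z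
  · refine Finset.card_lt_card (Finset.ssubset_iff_subset_ne.mpr
      ⟨(minor_iff_of_z_eq hz).mp h, fun hg => hne (ext hz hg)⟩)
  · have := card_gens_add_card_filter_le_of_minor h
    have := (filter_nonempty_of_minor h hz).card_pos
    omega

lemma contract_singleton_z {M : GEL L} {s : L} (hs : s ∈ M.gens) : (M.contract {s}).z = s := by
  change ({s} : Finset L).sup id ⊔ M.z = s
  rw [Finset.sup_singleton, id, sup_eq_left.mpr (M.lt_gens s hs).le]

lemma contract_singleton_gens {M : GEL L} {s : L} (hs : s ∈ M.gens) :
    (M.contract {s}).gens = M.contractGens s := by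
  rw [contract_gens, contract_singleton_z hs]

lemma eq_delete_or_eq_contract_of_minor {M N : GEL L} (h : Minor M N)
    (hcard : N.gens.card + 1 = M.gens.card) :
    (∃ f ∈ M.gens, N = M.delete {f}) ∨ ∃ s ∈ M.gens, N = M.contract {s} := by
  by_cases hz : N.z = M.z
  · have hsub := (minor_iff_of_z_eq hz).mp h
    have hcard' : (M.gens \ N.gens).card = 1 := by
      rw [Finset.card_sdiff_of_subset hsub]; omega
    obtain ⟨f, hf⟩ := Finset.card_eq_one.mp hcard'
    refine Or.inl ⟨f, (Finset.mem_sdiff.mp (hf ▸ Finset.mem_singleton_self f)).1, ext hz ?_⟩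
    change N.gens = M.gens \ {f}
    rw [← hf, Finset.sdiff_sdiff_eq_self hsub]
  · have hle := card_gens_add_card_filter_le_of_minor h
    have hpos := (filter_nonempty_of_minor h hz).card_pos
    obtain ⟨s, hs⟩ := Finset.card_eq_one.mp (by omega : (M.gens.filter (· ≤ N.z)).card = 1)
    have hNz : N.z = (M.contract {s}).z := by
      rw [← mem_carrier_iff.mp (minor_iff.mp h).1, spanBelow, hs]
      rfl
    refine Or.inr ⟨s, (Finset.mem_filter.mp (hs ▸ Finset.mem_singleton_self s)).1, ext hNz ?_⟩
    rw [contract_gens, ← hNz]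
    refine Finset.eq_of_subset_of_card_le (minor_iff.mp h).2 ?_
    have := card_contractGens_add_card_filter_le M N.z
    rw [hs, Finset.card_singleton] at this
    omega

theorem ncard_coatoms (M : GEL L) (P : GEL L → Prop) :
    {C | Minor M C ∧ C.gens.card + 1 = M.gens.card ∧ P C}.ncard =
      (M.gens.filter fun f => P (M.delete {f})).card +
      (M.gens.filter fun s =>
        (M.contractGens s).card + 1 = M.gens.card ∧ P (M.contract {s})).card := by
  set F := M.gens.filter fun f => P (M.delete {f})
  set K := M.gens.filter fun s => (M.contractGens s).card + 1 = M.gens.card ∧ P (M.contract {s})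
  have hset : {C | Minor M C ∧ C.gens.card + 1 = M.gens.card ∧ P C} =
      ↑(F.image (fun f => M.delete {f}) ∪ K.image (fun s => M.contract {s})) := by
    ext C
    simp only [Set.mem_ofPred_eq, Finset.coe_union, Finset.coe_image, Set.mem_union,
      Set.mem_image, Finset.mem_coe, F, K, Finset.mem_filter]
    constructor
    · rintro ⟨h, hcard, hP⟩
      rcases eq_delete_or_eq_contract_of_minor h hcard with ⟨f, hf, rfl⟩ | ⟨s, hs, rfl⟩
      · exact Or.inl ⟨f, ⟨hf, hP⟩, rfl⟩
      · exact Or.inr ⟨s, ⟨hs, by rwa [← contract_singleton_gens hs], hP⟩, rfl⟩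
    · rintro (⟨f, ⟨hf, hP⟩, rfl⟩ | ⟨s, ⟨hs, hcard, hP⟩, rfl⟩)
      · exact ⟨minor_delete M (Finset.singleton_subset_iff.mpr hf),
          by rw [delete_singleton_gens, Finset.card_erase_add_one hf], hP⟩
      · exact ⟨minor_contract M (Finset.singleton_subset_iff.mpr hs),
          by rwa [contract_singleton_gens hs], hP⟩
  have hdisj : Disjoint (F.image fun f => M.delete {f}) (K.image fun s => M.contract {s}) := by
    refine Finset.disjoint_left.mpr fun C hF hK => ?_
    obtain ⟨f, -, rfl⟩ := Finset.mem_image.mp hF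
    obtain ⟨s, hs, hfs⟩ := Finset.mem_image.mp hK
    have hs' := (Finset.mem_filter.mp hs).1
    have hz := congrArg GEL.z hfs
    rw [contract_singleton_z hs'] at hz
    exact (M.lt_gens s hs').ne' hz
  rw [hset, Set.ncard_coe_finset, Finset.card_union_of_disjoint hdisj,
    Finset.card_image_of_injOn, Finset.card_image_of_injOn]
  · intro s hs t ht hst
    have := congrArg GEL.z hst
    simpa only [contract_singleton_z (Finset.mem_filter.mp hs).1,
      contract_singleton_z (Finset.mem_filter.mp ht).1] using this
  · intro f hf g hg hfg
    have := congrArg GEL.gens hfg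
    simp only [delete_singleton_gens] at this
    exact M.gens.erase_injOn (Finset.mem_filter.mp hf).1 (Finset.mem_filter.mp hg).1 this

lemma spanBelow_delete_singleton (M : GEL L) (f ℓ : L) :
    (M.delete {f}).spanBelow ℓ = ((M.gens.filter (· ≤ ℓ)).erase f).sup id ⊔ M.z := by
  rw [spanBelow, filter_delete_singleton]
  rfl

noncomputable def deletable (B A : GEL L) : Finset L :=
  B.gens.filter fun f => Minor (B.delete {f}) A

/-- The cardinality condition says that contracting `s` loses no generator besides `s`. -/
noncomputable def contractible (B A : GEL L) : Finset L :=
  B.gens.filter fun s => (B.contractGens s).card + 1 = B.gens.card ∧ s ≤ A.z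

lemma contractible_subset (B A : GEL L) : B.contractible A ⊆ B.gens.filter (· ≤ A.z) :=
  fun x hx => by
    obtain ⟨hx, -, hxA⟩ := Finset.mem_filter.mp hx
    exact Finset.mem_filter.mpr ⟨hx, hxA⟩

variable {B A : GEL L} {s t : L}

lemma minor_delete_singleton_iff_of_le (hBA : Minor B A) {f : L} (hf : f ≤ A.z) :
    Minor (B.delete {f}) A ↔ ((B.gens.filter (· ≤ A.z)).erase f).sup id ⊔ B.z = A.z := by
  rw [minor_iff, mem_carrier_iff, spanBelow_delete_singleton,
    contractGens_delete_singleton_of_le hf]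
  exact and_iff_left (minor_iff.mp hBA).2

lemma minor_delete_singleton_iff_of_not_le (hBA : Minor B A) {f : L} (hf : ¬ f ≤ A.z) :
    Minor (B.delete {f}) A ↔ A.gens ⊆ (B.delete {f}).contractGens A.z := by
  rw [minor_iff, mem_carrier_iff, spanBelow_delete_singleton,
    Finset.erase_eq_of_notMem (s := B.gens.filter (· ≤ A.z)) (a := f)
      (fun h => hf (Finset.mem_filter.mp h).2)]
  exact and_iff_right (mem_carrier_iff.mp (minor_iff.mp hBA).1)

lemma card_deletable_add_card_contractible_of_filter_eq_empty (hBA : Minor B A)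
    (hcard : B.gens.card = A.gens.card + 2) (hS : B.gens.filter (· ≤ A.z) = ∅) :
    (B.deletable A).card + (B.contractible A).card = 2 := by
  have hz : A.z = B.z := by
    rw [← mem_carrier_iff.mp (minor_iff.mp hBA).1, spanBelow, hS, Finset.sup_empty, bot_sup_eq]
  have hsub : A.gens ⊆ B.gens := (minor_iff_of_z_eq hz).mp hBA
  have hdel : B.deletable A = B.gens \ A.gens := by
    ext f
    simp only [deletable, Finset.mem_filter, Finset.mem_sdiff]
    refine and_congr_right fun _ => ?_
    rw [minor_iff_of_z_eq (M := B.delete {f}) hz, delete_singleton_gens, Finset.subset_erase]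
    exact and_iff_right hsub
  have hcon : B.contractible A = ∅ := Finset.subset_empty.mp (hS ▸ contractible_subset B A)
  rw [hdel, hcon, Finset.card_sdiff_of_subset hsub, Finset.card_empty]
  omega

lemma z_eq_of_filter_eq_singleton (hBA : Minor B A) (hS : B.gens.filter (· ≤ A.z) = {s}) :
    A.z = s := by
  have hs : s ∈ B.gens := (Finset.mem_filter.mp (hS ▸ Finset.mem_singleton_self s)).1
  rw [← mem_carrier_iff.mp (minor_iff.mp hBA).1, spanBelow, hS, Finset.sup_singleton, id,
    sup_eq_left.mpr (B.lt_gens s hs).le]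

lemma contractible_of_filter_eq_singleton (hS : B.gens.filter (· ≤ A.z) = {s}) :
    B.contractible A =
      ({s} : Finset L).filter fun s => (B.contractGens s).card + 1 = B.gens.card := by
  ext t
  simp only [contractible, Finset.mem_filter, Finset.mem_singleton]
  constructor
  · rintro ⟨ht, hcard, htA⟩
    exact ⟨Finset.mem_singleton.mp (hS ▸ Finset.mem_filter.mpr ⟨ht, htA⟩), hcard⟩
  · rintro ⟨rfl, hcard⟩
    have ht : t ∈ B.gens.filter (· ≤ A.z) := hS ▸ Finset.mem_singleton_self t
    exact ⟨(Finset.mem_filter.mp ht).1, hcard, (Finset.mem_filter.mp ht).2⟩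

lemma mem_deletable_iff_of_filter_eq_singleton (hBA : Minor B A)
    (hS : B.gens.filter (· ≤ A.z) = {s}) {f : L} :
    f ∈ B.deletable A ↔ f ∈ B.gens ∧ ¬ f ≤ s ∧ A.gens ⊆ (B.delete {f}).contractGens s := by
  have hz := z_eq_of_filter_eq_singleton hBA hS
  simp only [deletable, Finset.mem_filter]
  refine and_congr_right fun hf => ?_
  by_cases hfs : f ≤ s
  · have hfs' : f = s := Finset.mem_singleton.mp (hS ▸ Finset.mem_filter.mpr ⟨hf, hz ▸ hfs⟩)
    rw [minor_delete_singleton_iff_of_le hBA (hz ▸ hfs), hS, hfs', Finset.erase_singleton,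
      Finset.sup_empty, bot_sup_eq, hz]
    exact iff_of_false (B.lt_gens s (hfs' ▸ hf)).ne (fun h => h.1 le_rfl)
  · rw [minor_delete_singleton_iff_of_not_le hBA (hz ▸ hfs), hz]
    exact (and_iff_right hfs).symm

lemma card_deletable_add_card_contractible_of_filter_eq_singleton_of_injective
    (hBA : Minor B A) (hcard : B.gens.card = A.gens.card + 2)
    (hS : B.gens.filter (· ≤ A.z) = {s}) (hinj : (B.contractGens s).card + 1 = B.gens.card) :
    (B.deletable A).card + (B.contractible A).card = 2 := by
  have hz := z_eq_of_filter_eq_singleton hBA hS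
  have hsub : A.gens ⊆ B.contractGens s := hz ▸ (minor_iff.mp hBA).2
  have hnc : ∀ f ∈ B.gens, ¬ f ≤ s → ¬ B.Collides s f := fun f hf hfs hc => by
    have := (card_contractGens_add_card_filter_lt_iff B s).mpr ⟨f, hf, hfs, hc⟩
    rw [← hz, hS, Finset.card_singleton, hz] at this
    omega
  obtain ⟨e, he⟩ : ∃ e, B.contractGens s \ A.gens = {e} :=
    Finset.card_eq_one.mp (by rw [Finset.card_sdiff_of_subset hsub]; omega)
  obtain ⟨heC, heA⟩ := Finset.mem_sdiff.mp (he ▸ Finset.mem_singleton_self e)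
  obtain ⟨hes, f₀, hf₀, rfl⟩ := mem_contractGens.mp heC
  have hdel : B.deletable A = {f₀} := by
    ext f
    rw [mem_deletable_iff_of_filter_eq_singleton hBA hS, Finset.mem_singleton]
    constructor
    · rintro ⟨hf, hfs, hA⟩
      rw [contractGens_delete_singleton_of_not_collides (hnc f hf hfs), Finset.subset_erase] at hA
      have hfC : f ⊔ s ∈ B.contractGens s :=
        mem_contractGens.mpr ⟨fun h => hfs (sup_eq_right.mp h), f, hf, rfl⟩
      have hfe := he ▸ Finset.mem_sdiff.mpr ⟨hfC, hA.2⟩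
      by_contra hne
      exact hnc f hf hfs ⟨f₀, hf₀, Ne.symm hne, (Finset.mem_singleton.mp hfe).symm⟩
    · intro hf
      rw [hf]
      have hf₀s : ¬ f₀ ≤ s := fun h => hes (sup_eq_right.mpr h)
      refine ⟨hf₀, hf₀s, ?_⟩
      rw [contractGens_delete_singleton_of_not_collides (hnc f₀ hf₀ hf₀s), Finset.subset_erase]
      exact ⟨hsub, heA⟩
  rw [hdel, contractible_of_filter_eq_singleton hS, Finset.filter_singleton, if_pos hinj]
  rfl

lemma mem_deletable_iff_of_gens_eq_contractGens (hBA : Minor B A)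
    (hS : B.gens.filter (· ≤ A.z) = {s}) (hA : A.gens = B.contractGens s) {f : L} :
    f ∈ B.deletable A ↔ f ∈ B.gens ∧ ¬ f ≤ s ∧ B.Collides s f := by
  rw [mem_deletable_iff_of_filter_eq_singleton hBA hS]
  refine and_congr_right fun hf => and_congr_right fun hfs => ?_
  by_cases hc : B.Collides s f
  · rw [contractGens_delete_singleton_of_collides hc, hA]
    exact iff_of_true subset_rfl hc
  · rw [contractGens_delete_singleton_of_not_collides hc, hA, Finset.subset_erase]
    refine iff_of_false (fun h => h.2 ?_) hc
    exact mem_contractGens.mpr ⟨fun h => hfs (sup_eq_right.mp h), f, hf, rfl⟩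

lemma card_deletable_add_card_contractible_of_filter_eq_singleton_of_not_injective
    (hBA : Minor B A) (hcard : B.gens.card = A.gens.card + 2)
    (hS : B.gens.filter (· ≤ A.z) = {s}) (hninj : (B.contractGens s).card + 1 ≠ B.gens.card) :
    (B.deletable A).card + (B.contractible A).card = 2 := by
  have hz := z_eq_of_filter_eq_singleton hBA hS
  have hS' : B.gens.filter (· ≤ s) = {s} := hz ▸ hS
  have hsub : A.gens ⊆ B.contractGens s := hz ▸ (minor_iff.mp hBA).2
  have hle := card_contractGens_add_card_filter_le B s
  rw [hS', Finset.card_singleton] at hle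
  have hA : A.gens = B.contractGens s := Finset.eq_of_subset_of_card_le hsub (by omega)
  have hcg : (B.contractGens s).card + 2 = B.gens.card := by rw [← hA]; omega
  obtain ⟨f, hf, hfs, g, hg, hgf, hgs⟩ :=
    (card_contractGens_add_card_filter_lt_iff B s).mp (by rw [hS', Finset.card_singleton]; omega)
  have hgs' : ¬ g ≤ s := fun h => hfs (le_sup_left.trans (hgs ▸ sup_eq_right.mpr h).le)
  have hdel : B.deletable A = {f, g} := by
    ext f'
    rw [mem_deletable_iff_of_gens_eq_contractGens hBA hS hA, Finset.mem_insert,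
      Finset.mem_singleton]
    constructor
    · rintro ⟨hf', hf's, hc'⟩
      by_contra! hne
      have hlt := (card_contractGens_add_card_filter_lt_iff (B.delete {f'}) s).mpr
        ⟨f, by rw [delete_singleton_gens]; exact Finset.mem_erase.mpr ⟨hne.1.symm, hf⟩, hfs,
          g, by rw [delete_singleton_gens]; exact Finset.mem_erase.mpr ⟨hne.2.symm, hg⟩, hgf, hgs⟩
      rw [contractGens_delete_singleton_of_collides hc', filter_delete_singleton, hS',
        Finset.erase_eq_of_notMem (s := {s}) (a := f')
          fun h => hf's (Finset.mem_singleton.mp h).le,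
        delete_singleton_gens, Finset.card_singleton] at hlt
      have := Finset.card_erase_add_one hf'
      omega
    · rintro (h | h)
      · rw [h]
        exact ⟨hf, hfs, g, hg, hgf, hgs⟩
      · rw [h]
        exact ⟨hg, hgs', f, hf, hgf.symm, hgs.symm⟩
  rw [hdel, Finset.card_pair hgf.symm, contractible_of_filter_eq_singleton hS,
    Finset.filter_singleton, if_neg hninj, Finset.card_empty]

lemma z_eq_of_filter_eq_pair (hBA : Minor B A) (hS : B.gens.filter (· ≤ A.z) = {s, t}) :
    A.z = s ⊔ t := by
  have hs : s ∈ B.gens := (Finset.mem_filter.mp (hS ▸ Finset.mem_insert_self s {t})).1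
  rw [← mem_carrier_iff.mp (minor_iff.mp hBA).1, spanBelow, hS, Finset.sup_insert,
    Finset.sup_singleton, id, id, sup_eq_left.mpr ((B.lt_gens s hs).le.trans le_sup_left)]

lemma mem_deletable_iff_of_filter_eq_pair (hBA : Minor B A)
    (hS : B.gens.filter (· ≤ A.z) = {s, t}) (hst : s ≠ t) : s ∈ B.deletable A ↔ s ≤ t := by
  have hsS : s ∈ B.gens.filter (· ≤ A.z) := hS ▸ Finset.mem_insert_self s {t}
  have htS : t ∈ B.gens.filter (· ≤ A.z) :=
    hS ▸ Finset.mem_insert_of_mem (Finset.mem_singleton_self t)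
  obtain ⟨hs, hsA⟩ := Finset.mem_filter.mp hsS
  rw [deletable, Finset.mem_filter, and_iff_right hs, minor_delete_singleton_iff_of_le hBA hsA,
    hS, Finset.erase_insert (Finset.notMem_singleton.mpr hst), Finset.sup_singleton, id,
    sup_eq_left.mpr (B.lt_gens t (Finset.mem_filter.mp htS).1).le,
    z_eq_of_filter_eq_pair hBA hS]
  exact eq_comm.trans sup_eq_right

lemma mem_contractible_iff_of_filter_eq_pair (hBA : Minor B A)
    (hcard : B.gens.card = A.gens.card + 2) (hS : B.gens.filter (· ≤ A.z) = {s, t})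
    (hst : s ≠ t) : s ∈ B.contractible A ↔ ¬ t ≤ s := by
  have hsS : s ∈ B.gens.filter (· ≤ A.z) := hS ▸ Finset.mem_insert_self s {t}
  have htS : t ∈ B.gens.filter (· ≤ A.z) :=
    hS ▸ Finset.mem_insert_of_mem (Finset.mem_singleton_self t)
  obtain ⟨hs, hsA⟩ := Finset.mem_filter.mp hsS
  obtain ⟨ht, htA⟩ := Finset.mem_filter.mp htS
  rw [contractible, Finset.mem_filter, and_iff_right hs, and_iff_left hsA]
  have hle := card_contractGens_add_card_filter_le B s
  have hss : s ∈ B.gens.filter (· ≤ s) := Finset.mem_filter.mpr ⟨hs, le_rfl⟩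
  constructor
  · intro hinj hts
    have hst' : {s, t} ⊆ B.gens.filter (· ≤ s) :=
      Finset.insert_subset hss
        (Finset.singleton_subset_iff.mpr (Finset.mem_filter.mpr ⟨ht, hts⟩))
    have := Finset.card_le_card hst'
    rw [Finset.card_pair hst] at this
    omega
  · intro hts
    have hK : Minor (B.contract {s}) A :=
      (minor_contract_iff (Finset.singleton_subset_iff.mpr hs)).mpr
        ⟨hBA, (contract_singleton_z hs).symm ▸ hsA⟩
    have hKA := card_gens_add_card_filter_le_of_minor hK
    rw [contract_singleton_gens hs] at hKA
    have hts' : t ⊔ s ∈ (B.contractGens s).filter (· ≤ A.z) :=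
      Finset.mem_filter.mpr
        ⟨mem_contractGens.mpr ⟨fun h => hts (sup_eq_right.mp h), t, ht, rfl⟩, sup_le htA hsA⟩
    have := Finset.card_pos.mpr ⟨_, hts'⟩
    have := Finset.card_pos.mpr ⟨_, hss⟩
    omega

lemma deletable_subset_of_filter_eq_pair (hcard : B.gens.card = A.gens.card + 2)
    (hS : B.gens.filter (· ≤ A.z) = {s, t}) (hst : s ≠ t) : B.deletable A ⊆ {s, t} := by
  intro f hf
  obtain ⟨hfB, hmin⟩ := Finset.mem_filter.mp hf
  by_contra hfS
  have := card_gens_add_card_filter_le_of_minor hmin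
  rw [filter_delete_singleton, hS, Finset.erase_eq_of_notMem hfS, Finset.card_pair hst,
    delete_singleton_gens] at this
  have := Finset.card_erase_add_one hfB
  omega

lemma card_deletable_add_card_contractible_of_filter_eq_pair (hBA : Minor B A)
    (hcard : B.gens.card = A.gens.card + 2) (hS : B.gens.filter (· ≤ A.z) = {s, t})
    (hst : s ≠ t) : (B.deletable A).card + (B.contractible A).card = 2 := by
  have hS' : B.gens.filter (· ≤ A.z) = {t, s} := hS.trans (Finset.pair_comm s t)
  refine Finset.card_add_card_eq_two_of_subset_pair hst
    (deletable_subset_of_filter_eq_pair hcard hS hst) (hS ▸ contractible_subset B A) ?_ ?_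
  · rw [mem_deletable_iff_of_filter_eq_pair hBA hS hst,
      mem_contractible_iff_of_filter_eq_pair hBA hcard hS' hst.symm, not_not]
  · rw [mem_deletable_iff_of_filter_eq_pair hBA hS' hst.symm,
      mem_contractible_iff_of_filter_eq_pair hBA hcard hS hst, not_not]

theorem card_deletable_add_card_contractible (hBA : Minor B A)
    (hcard : B.gens.card = A.gens.card + 2) :
    (B.deletable A).card + (B.contractible A).card = 2 := by
  have hle := card_gens_add_card_filter_le_of_minor hBA
  rcases (by omega : (B.gens.filter (· ≤ A.z)).card = 0 ∨ (B.gens.filter (· ≤ A.z)).card = 1 ∨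
      (B.gens.filter (· ≤ A.z)).card = 2) with h0 | h1 | h2
  · exact card_deletable_add_card_contractible_of_filter_eq_empty hBA hcard
      (Finset.card_eq_zero.mp h0)
  · obtain ⟨s, hS⟩ := Finset.card_eq_one.mp h1
    by_cases hinj : (B.contractGens s).card + 1 = B.gens.card
    · exact card_deletable_add_card_contractible_of_filter_eq_singleton_of_injective hBA hcard
        hS hinj
    · exact card_deletable_add_card_contractible_of_filter_eq_singleton_of_not_injective hBA hcard
        hS hinj
  · obtain ⟨s, t, hst, hS⟩ := Finset.card_eq_two.mp h2
    exact card_deletable_add_card_contractible_of_filter_eq_pair hBA hcard hS hst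

theorem ncard_minors_ne_of_card_eq_one {M : GEL L} (h : M.gens.card = 1) :
    {C | Minor M C ∧ C ≠ M}.ncard = 2 := by
  have hset : {C | Minor M C ∧ C ≠ M} =
      {C | Minor M C ∧ C.gens.card + 1 = M.gens.card ∧ True} := by
    ext C
    simp only [Set.mem_ofPred_eq, and_true]
    refine and_congr_right fun hC => ⟨fun hne => ?_, fun hcard hCM => ?_⟩
    · have := card_lt_of_minor hC hne
      omega
    · rw [hCM] at hcard
      omega
  obtain ⟨g, hg⟩ := Finset.card_eq_one.mp h
  rw [hset, ncard_coatoms]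
  simp [hg, contractGens, Finset.filter_singleton]

theorem ncard_minors_between {B A : GEL L} (hBA : Minor B A)
    (hcard : B.gens.card = A.gens.card + 2) :
    {C | Minor B C ∧ Minor C A ∧ C ≠ B ∧ C ≠ A}.ncard = 2 := by
  have hset : {C | Minor B C ∧ Minor C A ∧ C ≠ B ∧ C ≠ A} =
      {C | Minor B C ∧ C.gens.card + 1 = B.gens.card ∧ Minor C A} := by
    ext C
    simp only [Set.mem_ofPred_eq]
    constructor
    · rintro ⟨hBC, hCA, hCB, hAC⟩
      have := card_lt_of_minor hBC hCB
      have := card_lt_of_minor hCA (Ne.symm hAC)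
      exact ⟨hBC, by omega, hCA⟩
    · rintro ⟨hBC, hC, hCA⟩
      exact ⟨hBC, hCA, fun h => by rw [h] at hC; omega, fun h => by rw [h] at hC; omega⟩
  have hcontract : ∀ s ∈ B.gens, Minor (B.contract {s}) A ↔ s ≤ A.z := fun s hs => by
    rw [minor_contract_iff (Finset.singleton_subset_iff.mpr hs), contract_singleton_z hs]
    exact and_iff_right hBA
  rw [hset, ncard_coatoms, ← card_deletable_add_card_contractible hBA hcard]
  congr 2
  exact Finset.filter_congr fun s hs => and_congr_right fun _ => hcontract s hs

lemma ncard_setOf_some_eq {T : GEL L} {p : MP T → Prop} (hp : ¬ p none) :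
    {c | p c}.ncard = {C : GEL L | ∃ h : T.Minor C, p (some ⟨C, h⟩)}.ncard := by
  refine (Set.ncard_congr (fun C hC => some ⟨C, hC.1⟩) (fun C hC => hC.2)
    (fun C C' _ _ h => by simpa using h) ?_).symm
  rintro (_ | ⟨C, hC⟩) hpc
  · exact absurd hpc hp
  · exact ⟨C, ⟨hC, hpc⟩, rfl⟩

end GEL

/-- The minor poset `M(L,G)` is thin: every interval of length two contains
exactly two elements strictly between its endpoints. -/
theorem minorPoset_thin {L : Type*} [Lattice L] [OrderBot L] [DecidableEq L]
    (T : GEL L) (a b : GEL.MP T) (hab : GEL.mple T a b)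
    (hrk : GEL.mrank T b = GEL.mrank T a + 2) :
    ∃ x y : GEL.MP T, x ≠ y ∧
      {c : GEL.MP T | GEL.mple T a c ∧ GEL.mple T c b ∧ c ≠ a ∧ c ≠ b}
        = {x, y} := by
  refine Set.ncard_eq_two.mp ?_
  rcases a with _ | A <;> rcases b with _ | B
  · simp [GEL.mrank] at hrk
  · have hB : B.1.gens.card = 1 := by simpa [GEL.mrank] using hrk
    rw [GEL.ncard_setOf_some_eq (by simp), ← GEL.ncard_minors_ne_of_card_eq_one hB]
    congr 1
    ext C
    simp only [Set.mem_ofPred_eq, GEL.mple, ne_eq, Option.some.injEq, Subtype.ext_iff,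
      reduceCtorEq, not_false_eq_true, true_and]
    exact ⟨fun ⟨_, hBC, hB⟩ => ⟨hBC, hB⟩, fun ⟨hBC, hB⟩ => ⟨B.2.trans hBC, hBC, hB⟩⟩
  · exact hab.elim
  · have hcard : B.1.gens.card = A.1.gens.card + 2 := by simpa [GEL.mrank] using hrk
    rw [GEL.ncard_setOf_some_eq (by simp [GEL.mple]), ← GEL.ncard_minors_between hab hcard]
    congr 1
    ext C
    simp only [Set.mem_ofPred_eq, GEL.mple, ne_eq, Option.some.injEq, Subtype.ext_iff]
    exact ⟨fun ⟨_, hCA, hBC, hA, hB⟩ => ⟨hBC, hCA, hB, hA⟩,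
      fun ⟨hBC, hCA, hB, hA⟩ => ⟨B.2.trans hBC, hCA, hBC, hA, hB⟩⟩
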